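/- For Q > 0, σ > 0, s ∈ ℝ³, the function φ(x) = (Q/(4π ε₀ ‖x − s‖)) · erf(‖x − s‖/(√2 σ)) satisfies Poisson's equation Δφ(x) = −ρ(x)/ε₀ for x ≠ s, where ρ(x) = (Q/(σ³ (2π)^{3/2})) · exp(−‖x − s‖²/(2σ²)). -/

import Mathlib

open Real Filter MeasureTheory

noncomputable def laplacian {n : ℕ} (f : EuclideanSpace ℝ (Fin n) → ℝ)
    (x : EuclideanSpace ℝ (Fin n)) : ℝ :=
  ∑ i, fderiv ℝ (fderiv ℝ f) x (EuclideanSpace.single i 1) (EuclideanSpace.single i 1)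

noncomputable def erf (z : ℝ) : ℝ :=
  (2 / Real.sqrt Real.pi) * ∫ t in (0:ℝ)..z, Real.exp (-t ^ 2)

/-!
In `ℝⁿ` a radial function `h(r)`, `r = ‖y - s‖`, has Laplacian `h'' + (n - 1) h' / r` away from `s`;
for `n = 3` and `h = ψ / r` this collapses to `Δ (ψ(r) / r) = ψ''(r) / r`. The potential is of this
form with `ψ(r) = C erf(r / a)`, `C = Q / (4π ε₀)`, `a = √2 σ`, and differentiating
`erf' z = (2 / √π) e^{-z²}` once more gives `ψ''(r) / r = -(4C / (√π a³)) e^{-r² / a²} = -ρ / ε₀`.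
-/

open Topology InnerProductSpace

section Radial

variable {E : Type*} [NormedAddCommGroup E] [InnerProductSpace ℝ E]

theorem hasFDerivAt_norm {x : E} (hx : x ≠ 0) :
    HasFDerivAt (fun y : E => ‖y‖) (‖x‖⁻¹ • innerSL ℝ x) x := by
  have h := (hasDerivAt_sqrt (by positivity : ‖x‖ ^ 2 ≠ 0)).comp_hasFDerivAt x
    (hasStrictFDerivAt_norm_sq x).hasFDerivAt
  simp only [Function.comp_def, sqrt_sq (norm_nonneg _)] at h
  refine h.congr_fderiv ?_
  ext v
  simp only [one_div, mul_inv_rev, smul_apply, coe_innerSL_apply, nsmul_eq_mul, Nat.cast_ofNat,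
    smul_eq_mul]
  field_simp

theorem HasDerivAt.comp_norm_sub {h : ℝ → ℝ} {h' : ℝ} {s x : E} (hx : x ≠ s)
    (hh : HasDerivAt h h' ‖x - s‖) :
    HasFDerivAt (fun y => h ‖y - s‖) ((h' / ‖x - s‖) • innerSL ℝ (x - s)) x := by
  refine (hh.comp_hasFDerivAt x ((hasFDerivAt_norm (sub_ne_zero.2 hx)).comp x
    ((hasFDerivAt_id x).sub_const s))).congr_fderiv ?_
  ext v
  simp [div_eq_mul_inv, mul_assoc]

theorem fderiv_smul_innerSL_sub_apply {k : ℝ → ℝ} {k' : ℝ} {s x : E} (hx : x ≠ s)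
    (hk : HasDerivAt k k' ‖x - s‖) (v w : E) :
    fderiv ℝ (fun y => k ‖y - s‖ • innerSL ℝ (y - s)) x v w =
      k ‖x - s‖ * ⟪v, w⟫_ℝ + k' / ‖x - s‖ * ⟪x - s, v⟫_ℝ * ⟪x - s, w⟫_ℝ := by
  -- `innerSL ℝ` is typed as conjugate-linear; over `ℝ` it is linear only up to defeq.
  let T : E →L[ℝ] E →L[ℝ] ℝ := innerSL ℝ
  have hT : HasFDerivAt (fun y : E => innerSL ℝ (y - s)) T x :=
    (T.hasFDerivAt.comp x ((hasFDerivAt_id x).sub_const s)).congr_fderiv (by ext; simp)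
  have hD : HasFDerivAt (fun y => k ‖y - s‖ • innerSL ℝ (y - s)) _ x :=
    (hk.comp_norm_sub hx).smul hT
  rw [hD.fderiv]
  simp only [add_apply, FunLike.coe_smul, Pi.smul_apply,
    ContinuousLinearMap.smulRight_apply, innerSL_apply_apply, smul_eq_mul, div_eq_mul_inv]
  rfl

theorem fderiv_fderiv_comp_norm_sub_apply {h h' : ℝ → ℝ} {h'' : ℝ} {s x : E} (hx : x ≠ s)
    (hh : ∀ᶠ r in 𝓝 ‖x - s‖, HasDerivAt h (h' r) r) (hh' : HasDerivAt h' h'' ‖x - s‖) (v : E) :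
    fderiv ℝ (fderiv ℝ fun y => h ‖y - s‖) x v v =
      h' ‖x - s‖ / ‖x - s‖ * ‖v‖ ^ 2 +
        (h'' - h' ‖x - s‖ / ‖x - s‖) / ‖x - s‖ ^ 2 * ⟪x - s, v⟫_ℝ ^ 2 := by
  have hr : ‖x - s‖ ≠ 0 := norm_ne_zero_iff.2 (sub_ne_zero.2 hx)
  have hgrad : fderiv ℝ (fun y => h ‖y - s‖) =ᶠ[𝓝 x]
      fun y => (h' ‖y - s‖ / ‖y - s‖) • innerSL ℝ (y - s) := by
    have hcont : Continuous fun y : E => ‖y - s‖ := by fun_prop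
    filter_upwards [hcont.continuousAt.eventually hh, isOpen_ne.mem_nhds hx] with y hy hys
    exact (hy.comp_norm_sub hys).fderiv
  have hk : HasDerivAt (fun r => h' r / r) ((h'' * ‖x - s‖ - h' ‖x - s‖ * 1) / ‖x - s‖ ^ 2)
      ‖x - s‖ := hh'.div (hasDerivAt_id _) hr
  rw [hgrad.fderiv_eq, fderiv_smul_innerSL_sub_apply (k := fun r => h' r / r) hx hk,
    real_inner_self_eq_norm_sq]
  field_simp

end Radial

theorem laplacian_comp_norm_sub {n : ℕ} {h h' : ℝ → ℝ} {h'' : ℝ}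
    {s x : EuclideanSpace ℝ (Fin n)} (hx : x ≠ s)
    (hh : ∀ᶠ r in 𝓝 ‖x - s‖, HasDerivAt h (h' r) r) (hh' : HasDerivAt h' h'' ‖x - s‖) :
    laplacian (fun y => h ‖y - s‖) x = h'' + (n - 1) * h' ‖x - s‖ / ‖x - s‖ := by
  have hr : ‖x - s‖ ≠ 0 := norm_ne_zero_iff.2 (sub_ne_zero.2 hx)
  have hbasis : ∀ i, EuclideanSpace.single i (1 : ℝ) = EuclideanSpace.basisFun (Fin n) ℝ i :=
    fun i => (EuclideanSpace.basisFun_apply _ _ i).symm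
  simp only [laplacian, fderiv_fderiv_comp_norm_sub_apply hx hh hh', hbasis,
    OrthonormalBasis.norm_eq_one, Finset.sum_add_distrib, ← Finset.mul_sum,
    OrthonormalBasis.sum_sq_inner_left, one_pow, Finset.sum_const, Finset.card_univ,
    Fintype.card_fin, nsmul_eq_mul, mul_one]
  field_simp
  ring

theorem laplacian_div_norm_sub {ψ ψ' : ℝ → ℝ} {ψ'' : ℝ} {s x : EuclideanSpace ℝ (Fin 3)}
    (hx : x ≠ s) (hψ : ∀ᶠ r in 𝓝 ‖x - s‖, HasDerivAt ψ (ψ' r) r)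
    (hψ' : HasDerivAt ψ' ψ'' ‖x - s‖) :
    laplacian (fun y => ψ ‖y - s‖ / ‖y - s‖) x = ψ'' / ‖x - s‖ := by
  have hr : 0 < ‖x - s‖ := norm_pos_iff.2 (sub_ne_zero.2 hx)
  have hh : ∀ᶠ r in 𝓝 ‖x - s‖,
      HasDerivAt (fun r => ψ r / r) ((ψ' r * r - ψ r * 1) / r ^ 2) r := by
    filter_upwards [hψ, lt_mem_nhds hr] with r hψr hr_pos
    exact hψr.div (hasDerivAt_id r) hr_pos.ne'
  have hh' := ((hψ'.mul (hasDerivAt_id _)).sub ((hψ.self_of_nhds).mul_const 1)).div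
    ((hasDerivAt_id _).pow 2) (pow_ne_zero 2 hr.ne')
  rw [laplacian_comp_norm_sub hx hh hh']
  simp only [id_eq, mul_one, add_sub_cancel_right, Pi.pow_apply, Pi.sub_apply, Pi.mul_apply,
    Nat.cast_ofNat, Nat.add_one_sub_one, pow_one]
  field_simp
  ring

theorem hasDerivAt_erf (z : ℝ) : HasDerivAt erf (2 / √π * exp (-z ^ 2)) z := by
  have hc : Continuous fun t : ℝ => exp (-t ^ 2) := by fun_prop
  exact (intervalIntegral.integral_hasDerivAt_right (hc.intervalIntegrable 0 z)
    hc.aestronglyMeasurable.stronglyMeasurableAtFilter hc.continuousAt).const_mul _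

theorem laplacian_erf_div_norm_sub (C a : ℝ) {s x : EuclideanSpace ℝ (Fin 3)} (hx : x ≠ s) :
    laplacian (fun y => C * erf (‖y - s‖ / a) / ‖y - s‖) x =
      -(4 * C / (√π * a ^ 3)) * exp (-(‖x - s‖ / a) ^ 2) := by
  have hψ : ∀ r, HasDerivAt (fun r => C * erf (r / a))
      (C * (2 / √π * exp (-(r / a) ^ 2) * (1 / a))) r :=
    fun r => ((hasDerivAt_erf _).comp r ((hasDerivAt_id r).div_const a)).const_mul C
  have hψ' := (((((hasDerivAt_id' ‖x - s‖).div_const a).fun_pow 2).fun_neg.exp.const_mul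
    (2 / √π)).mul_const (1 / a)).const_mul C
  rw [laplacian_div_norm_sub hx (.of_forall hψ) hψ']
  have hr : ‖x - s‖ ≠ 0 := norm_ne_zero_iff.2 (sub_ne_zero.2 hx)
  field_simp
  ring

theorem potential_solves_poisson_general (Q σ ε₀ : ℝ) (s : EuclideanSpace ℝ (Fin 3)) :
    ∀ x : EuclideanSpace ℝ (Fin 3), x ≠ s →
      laplacian
        (fun y : EuclideanSpace ℝ (Fin 3) =>
          Q / (4 * π * ε₀ * ‖y - s‖) * erf (‖y - s‖ / (Real.sqrt 2 * σ))) x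
      = -(Q / (σ ^ 3 * (2 * π) ^ ((3 : ℝ) / 2)) *
          Real.exp (-‖x - s‖ ^ 2 / (2 * σ ^ 2))) / ε₀ := by
  intro x hx
  have hφ : (fun y : EuclideanSpace ℝ (Fin 3) =>
      Q / (4 * π * ε₀ * ‖y - s‖) * erf (‖y - s‖ / (√2 * σ))) =
      fun y => Q / (4 * π * ε₀) * erf (‖y - s‖ / (√2 * σ)) / ‖y - s‖ := by
    ext y
    ring
  have hexp : -(‖x - s‖ / (√2 * σ)) ^ 2 = -‖x - s‖ ^ 2 / (2 * σ ^ 2) := by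
    rw [div_pow, mul_pow, sq_sqrt zero_le_two, neg_div]
  have hcube : (√2 * σ) ^ 3 = 2 * √2 * σ ^ 3 := by
    rw [mul_pow, pow_succ, sq_sqrt zero_le_two]
  have h32 : (2 * π) ^ ((3 : ℝ) / 2) = 2 * √2 * π * √π := by
    rw [show (3 : ℝ) / 2 = 1 + 1 / 2 by norm_num, rpow_add (by positivity), rpow_one,
      ← sqrt_eq_rpow, sqrt_mul zero_le_two]
    ring
  rw [hφ, laplacian_erf_div_norm_sub _ _ hx, hexp, hcube, h32]
  ring

theorem potential_solves_poisson (Q σ ε₀ : ℝ) (hQ : 0 < Q) (hσ : 0 < σ)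
    (hε : 0 < ε₀) (s : EuclideanSpace ℝ (Fin 3)) :
    ∀ x : EuclideanSpace ℝ (Fin 3), x ≠ s →
      laplacian
        (fun y : EuclideanSpace ℝ (Fin 3) =>
          Q / (4 * π * ε₀ * ‖y - s‖) * erf (‖y - s‖ / (Real.sqrt 2 * σ))) x
      = -(Q / (σ ^ 3 * (2 * π) ^ ((3 : ℝ) / 2)) *
          Real.exp (-‖x - s‖ ^ 2 / (2 * σ ^ 2))) / ε₀ :=
  potential_solves_poisson_general Q σ ε₀ s
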